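/- Let r ≥ 1, 0 ≤ k ≤ n, and let F, G ⊆ {0,…,n} be nonempty. Let (α, σ) be a pair with α ∈ ℕ^{n+1}, |α| = r, σ : {1,…,k} → {0,…,n} increasing, and ⟦α,σ⟧ ⊆ F. Then for every x with λ_i(x) = 0 for all i ∉ G and all v_1,…,v_k ∈ T_G: if ⟦α,σ⟧ ⊆ F∩G then λ^α(x)·ψ^{α,F}_σ(v_1,…,v_k) = λ^α(x)·ψ^{α,F∩G}_σ(v_1,…,v_k), and otherwise λ^α(x)·ψ^{α,F}_σ(v_1,…,v_k) = 0. (This expresses the consistency relation tr_{H,G} ∘ E_{F,H} = E_{F∩G,G} ∘ tr_{F,F∩G} for the family of extension operators for the spaces P_rΛ^k.) -/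

import Mathlib

open scoped BigOperators

noncomputable section

/-- The wedge product of `k` linear functionals on `ℝⁿ`:
`(wedge f) v = det (matrix whose (j,i) entry is f i (v j))`. -/
def wedge {n k : ℕ} (f : Fin k → ((Fin n → ℝ) →ₗ[ℝ] ℝ)) :
    (Fin n → ℝ) [⋀^Fin k]→ₗ[ℝ] ℝ :=
  (Matrix.detRowAlternating : (Fin k → ℝ) [⋀^Fin k]→ₗ[ℝ] ℝ).compLinearMap
    (LinearMap.pi f)

/-- The wedge product of a linear functional (a `1`-form) with an alternating `k`-form on `ℝⁿ`. -/
def oneWedge {n k : ℕ} (f : (Fin n → ℝ) →ₗ[ℝ] ℝ)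
    (η : (Fin n → ℝ) [⋀^Fin k]→ₗ[ℝ] ℝ) :
    (Fin n → ℝ) [⋀^Fin (k + 1)]→ₗ[ℝ] ℝ :=
  ((TensorProduct.lid ℝ ℝ).toLinearMap.compAlternatingMap
    (AlternatingMap.domCoprod
      ((AlternatingMap.ofSubsingleton ℝ (Fin n → ℝ) ℝ (0 : Fin 1)) f) η)).domDomCongr
    (finSumFinEquiv.trans (finCongr (Nat.add_comm 1 k)))

/-- A nondegenerate simplex in `ℝⁿ` with vertices `x 0, …, x n`, together with its barycentric
coordinate functions `λ_i = dlam i + c i`: the unique affine functions with `λ_i (x j) = δ_{ij}`,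
`dlam i` being the linear part `dλ_i`. -/
structure Simplex (n : ℕ) where
  x : Fin (n + 1) → (Fin n → ℝ)
  affineIndep : AffineIndependent ℝ x
  dlam : Fin (n + 1) → ((Fin n → ℝ) →ₗ[ℝ] ℝ)
  c : Fin (n + 1) → ℝ
  lam_vertex : ∀ i j, dlam i (x j) + c i = if i = j then 1 else 0

namespace Simplex

variable {n : ℕ} (B : Simplex n)

/-- The barycentric coordinate function `λ_i`. -/
def lam (i : Fin (n + 1)) (y : Fin n → ℝ) : ℝ := B.dlam i y + B.c i

/-- The barycentric monomial `λ^α = λ_0^{α_0} ⋯ λ_n^{α_n}`. -/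
def lamPow (α : Fin (n + 1) → ℕ) (y : Fin n → ℝ) : ℝ := ∏ i, (B.lam i y) ^ (α i)

/-- `dλ_σ = dλ_{σ 0} ∧ ⋯ ∧ dλ_{σ (k-1)}`. -/
def dlamWedge {k : ℕ} (σ : Fin k → Fin (n + 1)) : (Fin n → ℝ) [⋀^Fin k]→ₗ[ℝ] ℝ :=
  wedge fun j => B.dlam (σ j)

/-- The Whitney form `φ_σ = Σ_i (-1)^i λ_{σ i} dλ_{σ 0} ∧ ⋯ ∧ (omit dλ_{σ i}) ∧ ⋯ ∧ dλ_{σ k}`. -/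
def whitney {k : ℕ} (σ : Fin (k + 1) → Fin (n + 1)) (y : Fin n → ℝ) :
    (Fin n → ℝ) [⋀^Fin k]→ₗ[ℝ] ℝ :=
  ∑ i : Fin (k + 1), ((-1 : ℝ) ^ (i : ℕ) * B.lam (σ i) y) •
    wedge fun j : Fin k => B.dlam (σ (i.succAbove j))

/-- The tangent space `T_S = ∩_{i ∉ S} ker dλ_i` of the face `f_S`. -/
def tangent (S : Finset (Fin (n + 1))) : Set (Fin n → ℝ) :=
  {v | ∀ i ∉ S, B.dlam i v = 0}

/-- `ψ^{α,S}_i = dλ_i - (α_i / r) Σ_{j ∈ S} dλ_j`. -/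
def psi (α : Fin (n + 1) → ℕ) (r : ℕ) (S : Finset (Fin (n + 1))) (i : Fin (n + 1)) :
    (Fin n → ℝ) →ₗ[ℝ] ℝ :=
  B.dlam i - ((α i : ℝ) / (r : ℝ)) • ∑ j ∈ S, B.dlam j

/-- `ψ^{α,S}_σ = ψ^{α,S}_{σ 1} ∧ ⋯ ∧ ψ^{α,S}_{σ k}`. -/
def psiWedge {k : ℕ} (α : Fin (n + 1) → ℕ) (r : ℕ) (S : Finset (Fin (n + 1)))
    (σ : Fin k → Fin (n + 1)) : (Fin n → ℝ) [⋀^Fin k]→ₗ[ℝ] ℝ :=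
  wedge fun j => B.psi α r S (σ j)

/-- The list of direction vectors `x_j - x_l`, with `x_j - x_l` repeated `α j` times. -/
def dirList (α : Fin (n + 1) → ℕ) (l : Fin (n + 1)) : List (Fin n → ℝ) :=
  (List.finRange (n + 1)).flatMap fun j => List.replicate (α j) (B.x j - B.x l)

end Simplex

/-- The support `⟦α⟧` of a multi-index. -/
def suppF {n : ℕ} (α : Fin (n + 1) → ℕ) : Finset (Fin (n + 1)) :=
  Finset.univ.filter fun i => α i ≠ 0

/-- The range `⟦σ⟧` of an (increasing) map, as a finset. -/
def rangeF {n k : ℕ} (σ : Fin k → Fin (n + 1)) : Finset (Fin (n + 1)) :=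
  Finset.image σ Finset.univ

/-- `f : ℝⁿ → ℝ` is a polynomial function of (total) degree at most `r`. -/
def IsPolyDeg {n : ℕ} (r : ℕ) (f : (Fin n → ℝ) → ℝ) : Prop :=
  ∃ p : MvPolynomial (Fin n) ℝ, p.totalDegree ≤ r ∧ ∀ y, MvPolynomial.eval y p = f y

/-- `P_r`: the space of polynomial functions on `ℝⁿ` of degree at most `r`. -/
def Pscalar (n r : ℕ) : Submodule ℝ ((Fin n → ℝ) → ℝ) where
  carrier := {f | IsPolyDeg r f}
  add_mem' := by
    rintro f g ⟨p, hp, hpe⟩ ⟨q, hq, hqe⟩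
    exact ⟨p + q, le_trans (MvPolynomial.totalDegree_add p q) (max_le hp hq),
      fun y => by simp [hpe y, hqe y]⟩
  zero_mem' := ⟨0, by simp, fun y => by simp⟩
  smul_mem' := by
    rintro a f ⟨p, hp, hpe⟩
    exact ⟨a • p, le_trans (MvPolynomial.totalDegree_smul_le a p) hp,
      fun y => by simp [MvPolynomial.smul_eq_C_mul, hpe y]⟩

/-- `P_r Λ^k`: the space of polynomial differential `k`-forms of degree at most `r` on `ℝⁿ`. -/
def PLambda (n r k : ℕ) :
    Submodule ℝ ((Fin n → ℝ) → ((Fin n → ℝ) [⋀^Fin k]→ₗ[ℝ] ℝ)) where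
  carrier := {ω | ∀ v : Fin k → (Fin n → ℝ), IsPolyDeg r fun y => ω y v}
  add_mem' := by
    intro ω η hω hη v
    exact (Pscalar n r).add_mem (hω v) (hη v)
  zero_mem' := fun v => (Pscalar n r).zero_mem
  smul_mem' := by
    intro a ω hω v
    exact (Pscalar n r).smul_mem a (hω v)

/-- The Koszul operator `κ`, contracting a `(k+1)`-form field with the position vector. -/
def koszulHom (n k : ℕ) :
    ((Fin n → ℝ) → ((Fin n → ℝ) [⋀^Fin (k + 1)]→ₗ[ℝ] ℝ)) →ₗ[ℝ]
      ((Fin n → ℝ) → ((Fin n → ℝ) [⋀^Fin k]→ₗ[ℝ] ℝ)) where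
  toFun ω := fun y => (ω y).curryLeft y
  map_add' ω η := by funext y; simp
  map_smul' a ω := by funext y; simp

/-- `P⁻_r Λ^k = P_{r-1} Λ^k + κ (P_{r-1} Λ^{k+1})`. -/
def PminusLambda (n r k : ℕ) :
    Submodule ℝ ((Fin n → ℝ) → ((Fin n → ℝ) [⋀^Fin k]→ₗ[ℝ] ℝ)) :=
  PLambda n (r - 1) k ⊔ Submodule.map (koszulHom n k) (PLambda n (r - 1) (k + 1))

/-- `ω` has vanishing trace on the face `f_S`. -/
def VanishTrace {n k : ℕ} (B : Simplex n) (S : Finset (Fin (n + 1)))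
    (ω : (Fin n → ℝ) → ((Fin n → ℝ) [⋀^Fin k]→ₗ[ℝ] ℝ)) : Prop :=
  ∀ y : Fin n → ℝ, (∀ i ∉ S, B.lam i y = 0) →
    ∀ v : Fin k → (Fin n → ℝ), (∀ j, v j ∈ B.tangent S) → ω y v = 0

/-- Forms having vanishing trace on every face `f_S` with `|S| = n`
(the codimension-one faces). -/
def traceZeroSub {n : ℕ} (B : Simplex n) (k : ℕ) :
    Submodule ℝ ((Fin n → ℝ) → ((Fin n → ℝ) [⋀^Fin k]→ₗ[ℝ] ℝ)) where
  carrier := {ω | ∀ S : Finset (Fin (n + 1)), S.card = n → VanishTrace B S ω}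
  add_mem' := by
    intro ω η hω hη S hS y hy v hv
    simp only [Pi.add_apply, AlternatingMap.add_apply, hω S hS y hy v hv,
      hη S hS y hy v hv, add_zero]
  zero_mem' := by intro S hS y hy v hv; simp
  smul_mem' := by
    intro a ω hω S hS y hy v hv
    simp only [Pi.smul_apply, AlternatingMap.smul_apply, hω S hS y hy v hv, smul_zero]

/-- `P̊_r Λ^k`: polynomial forms with vanishing trace on the boundary. -/
def PLambdaZero {n : ℕ} (B : Simplex n) (r k : ℕ) :
    Submodule ℝ ((Fin n → ℝ) → ((Fin n → ℝ) [⋀^Fin k]→ₗ[ℝ] ℝ)) :=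
  PLambda n r k ⊓ traceZeroSub B k

/-- `P̊⁻_r Λ^k`: forms in `P⁻_r Λ^k` with vanishing trace on the boundary. -/
def PminusLambdaZero {n : ℕ} (B : Simplex n) (r k : ℕ) :
    Submodule ℝ ((Fin n → ℝ) → ((Fin n → ℝ) [⋀^Fin k]→ₗ[ℝ] ℝ)) :=
  PminusLambda n r k ⊓ traceZeroSub B k

/-- `f` vanishes to order `r` at `y`: all partial derivatives of order `< r` vanish at `y`. -/
def VanishOrder {n : ℕ} (r : ℕ) (f : (Fin n → ℝ) → ℝ) (y : Fin n → ℝ) : Prop :=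
  ∀ m : ℕ, m < r → iteratedFDeriv ℝ m f y = 0

/-- Iterated directional derivatives along a list of directions. -/
def dirDerivList {n : ℕ} : List (Fin n → ℝ) → ((Fin n → ℝ) → ℝ) → ((Fin n → ℝ) → ℝ)
  | [], f => f
  | t :: ts, f => dirDerivList ts fun y => fderiv ℝ f y t

theorem wedge_apply {n k : ℕ} (f : Fin k → ((Fin n → ℝ) →ₗ[ℝ] ℝ)) (v : Fin k → (Fin n → ℝ)) :
    wedge f v = (Matrix.of fun j i => f i (v j)).det :=
  rfl

theorem wedge_apply_congr {n k : ℕ} {f g : Fin k → ((Fin n → ℝ) →ₗ[ℝ] ℝ)}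
    {v : Fin k → (Fin n → ℝ)} (h : ∀ i j, f i (v j) = g i (v j)) : wedge f v = wedge g v := by
  simp only [wedge_apply, h]

theorem wedge_apply_eq_zero {n k : ℕ} {f : Fin k → ((Fin n → ℝ) →ₗ[ℝ] ℝ)}
    {v : Fin k → (Fin n → ℝ)} (i : Fin k) (h : ∀ j, f i (v j) = 0) : wedge f v = 0 := by
  rw [wedge_apply]
  exact Matrix.det_eq_zero_of_column_eq_zero i h

theorem mem_suppF {n : ℕ} {α : Fin (n + 1) → ℕ} {i : Fin (n + 1)} : i ∈ suppF α ↔ α i ≠ 0 := by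
  simp [suppF]

namespace Simplex

variable {n : ℕ} (B : Simplex n)

theorem lamPow_eq_zero {α : Fin (n + 1) → ℕ} {y : Fin n → ℝ} {i : Fin (n + 1)}
    (hi : i ∈ suppF α) (hy : B.lam i y = 0) : B.lamPow α y = 0 :=
  Finset.prod_eq_zero (Finset.mem_univ i) (by rw [hy]; exact zero_pow (mem_suppF.mp hi))

theorem sum_dlam_inter_of_mem_tangent {F G : Finset (Fin (n + 1))} {w : Fin n → ℝ}
    (hw : w ∈ B.tangent G) : ∑ j ∈ F ∩ G, B.dlam j w = ∑ j ∈ F, B.dlam j w :=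
  Finset.sum_subset Finset.inter_subset_left fun j hjF hj =>
    hw j fun hjG => hj (Finset.mem_inter.mpr ⟨hjF, hjG⟩)

theorem psi_inter_apply_of_mem_tangent (α : Fin (n + 1) → ℕ) (r : ℕ) (F : Finset (Fin (n + 1)))
    {G : Finset (Fin (n + 1))} (i : Fin (n + 1)) {w : Fin n → ℝ} (hw : w ∈ B.tangent G) :
    B.psi α r (F ∩ G) i w = B.psi α r F i w := by
  simp only [psi, LinearMap.sub_apply, LinearMap.smul_apply, LinearMap.coe_sum,
    Finset.sum_apply, B.sum_dlam_inter_of_mem_tangent hw]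

theorem psi_of_eq_zero {α : Fin (n + 1) → ℕ} (r : ℕ) (S : Finset (Fin (n + 1)))
    {i : Fin (n + 1)} (hi : α i = 0) : B.psi α r S i = B.dlam i := by
  simp [psi, hi]

theorem psiWedge_inter_apply_of_mem_tangent {k : ℕ} (α : Fin (n + 1) → ℕ) (r : ℕ)
    (F : Finset (Fin (n + 1))) {G : Finset (Fin (n + 1))} (σ : Fin k → Fin (n + 1))
    {v : Fin k → (Fin n → ℝ)} (hv : ∀ j, v j ∈ B.tangent G) :
    B.psiWedge α r (F ∩ G) σ v = B.psiWedge α r F σ v :=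
  wedge_apply_congr fun i j => B.psi_inter_apply_of_mem_tangent α r F (σ i) (hv j)

theorem psiWedge_apply_eq_zero {k : ℕ} {α : Fin (n + 1) → ℕ} (r : ℕ) (S : Finset (Fin (n + 1)))
    {G : Finset (Fin (n + 1))} {σ : Fin k → Fin (n + 1)} {v : Fin k → (Fin n → ℝ)}
    (hv : ∀ j, v j ∈ B.tangent G) {i : Fin (n + 1)} (hiσ : i ∈ rangeF σ) (hiα : α i = 0)
    (hiG : i ∉ G) : B.psiWedge α r S σ v = 0 := by
  obtain ⟨j₀, -, rfl⟩ := Finset.mem_image.mp hiσ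
  exact wedge_apply_eq_zero j₀ fun j => by rw [B.psi_of_eq_zero r S hiα]; exact hv j _ hiG

end Simplex

theorem stmt13_general {n : ℕ} (B : Simplex n) (r k : ℕ)
    (F G : Finset (Fin (n + 1)))
    (α : Fin (n + 1) → ℕ) (σ : Fin k → Fin (n + 1))
    (hsub : suppF α ∪ rangeF σ ⊆ F) :
    ∀ y : Fin n → ℝ, (∀ i ∉ G, B.lam i y = 0) →
      ∀ v : Fin k → (Fin n → ℝ), (∀ j, v j ∈ B.tangent G) →
        (suppF α ∪ rangeF σ ⊆ F ∩ G →
          B.lamPow α y * B.psiWedge α r F σ v = B.lamPow α y * B.psiWedge α r (F ∩ G) σ v)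
        ∧ (¬ suppF α ∪ rangeF σ ⊆ F ∩ G → B.lamPow α y * B.psiWedge α r F σ v = 0) := by
  intro y hy v hv
  refine ⟨fun _ => by rw [B.psiWedge_inter_apply_of_mem_tangent α r F σ hv], fun hns => ?_⟩
  by_cases hαG : suppF α ⊆ G
  · obtain ⟨i, hi, hiFG⟩ := Finset.not_subset.mp hns
    have hiG : i ∉ G := fun hiG => hiFG (Finset.mem_inter.mpr ⟨hsub hi, hiG⟩)
    have hiα : i ∉ suppF α := fun h => hiG (hαG h)
    have hiσ : i ∈ rangeF σ := (Finset.mem_union.mp hi).resolve_left hiα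
    rw [B.psiWedge_apply_eq_zero r F hv hiσ (not_not.mp (mt mem_suppF.mpr hiα)) hiG, mul_zero]
  · obtain ⟨i, hiα, hiG⟩ := Finset.not_subset.mp hαG
    rw [B.lamPow_eq_zero hiα (hy i hiG), zero_mul]

/-- consistency of the extension operators for `P_r Λ^k`: on the face `f_G`, the
trace of `λ^α ψ^{α,F}_σ` coincides with that of `λ^α ψ^{α,F∩G}_σ` when `⟦α,σ⟧ ⊆ F ∩ G`, and
vanishes otherwise. -/
theorem stmt13 {n : ℕ} (hn : 1 ≤ n) (B : Simplex n) (r k : ℕ) (hr : 1 ≤ r) (hk : k ≤ n)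
    (F G : Finset (Fin (n + 1))) (hF : F.Nonempty) (hG : G.Nonempty)
    (α : Fin (n + 1) → ℕ) (σ : Fin k → Fin (n + 1))
    (hα : (∑ i, α i) = r) (hσ : StrictMono σ) (hsub : suppF α ∪ rangeF σ ⊆ F) :
    ∀ y : Fin n → ℝ, (∀ i ∉ G, B.lam i y = 0) →
      ∀ v : Fin k → (Fin n → ℝ), (∀ j, v j ∈ B.tangent G) →
        (suppF α ∪ rangeF σ ⊆ F ∩ G →
          B.lamPow α y * B.psiWedge α r F σ v = B.lamPow α y * B.psiWedge α r (F ∩ G) σ v)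
        ∧ (¬ suppF α ∪ rangeF σ ⊆ F ∩ G → B.lamPow α y * B.psiWedge α r F σ v = 0) :=
  stmt13_general B r k F G α σ hsub
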